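/- Let π be a permutation of {1,…,n} and i, j ∈ {1,…,n}. Then the 4-cell [(i−1,j−1),(i,j)] of G_n is a source cell of β_π if and only if j = π(i). -/

import Mathlib

/-- The square grid `G_n`: the direct product of two `(n+1)`-element chains. -/
abbrev Grid (n : ℕ) := Fin (n + 1) × Fin (n + 1)

/-- `θ` is a join-congruence: an equivalence relation compatible with `⊔`. -/
def IsJoinCong {S : Type*} [SemilatticeSup S] (θ : S → S → Prop) : Prop :=
  Equivalence θ ∧ ∀ a b c : S, θ a b → θ (a ⊔ c) (b ⊔ c)

/-- The smallest join-congruence containing the relation `R`. -/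
def joinCongGen {S : Type*} [SemilatticeSup S] (R : S → S → Prop) : S → S → Prop :=
  fun a b => ∀ θ : S → S → Prop, IsJoinCong θ → (∀ x y, R x y → θ x y) → θ a b

theorem joinCongGen_equivalence {S : Type*} [SemilatticeSup S] (R : S → S → Prop) :
    Equivalence (joinCongGen R) where
  refl a := fun _θ hθ _ => hθ.1.refl a
  symm h := fun θ hθ hR => hθ.1.symm (h θ hθ hR)
  trans h₁ h₂ := fun θ hθ hR => hθ.1.trans (h₁ θ hθ hR) (h₂ θ hθ hR)

/-- The generating pairs of `β_π`. -/
def betaGen {n : ℕ} (π : Equiv.Perm (Fin n)) : Grid n → Grid n → Prop :=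
  fun a b => ∃ i : Fin n,
    (a = (i.castSucc, (π i).succ) ∧ b = (i.succ, (π i).succ)) ∨
    (a = (i.succ, (π i).castSucc) ∧ b = (i.succ, (π i).succ))

/-- `β_π`, the smallest join-congruence on the grid containing `betaGen π`. -/
def beta {n : ℕ} (π : Equiv.Perm (Fin n)) : Grid n → Grid n → Prop :=
  joinCongGen (betaGen π)

/-- The setoid on the grid determined by `β_π`. -/
def betaSetoid {n : ℕ} (π : Equiv.Perm (Fin n)) : Setoid (Grid n) :=
  ⟨beta π, joinCongGen_equivalence _⟩

/-- The quotient `G_n/β_π`. -/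
def QuotGrid {n : ℕ} (π : Equiv.Perm (Fin n)) := Quotient (betaSetoid π)

/-- The order on `G_n/β_π`: `[a] ≤ [b]` iff `(a ⊔ b, b) ∈ β_π`. -/
instance QuotGrid.instLE {n : ℕ} (π : Equiv.Perm (Fin n)) : LE (QuotGrid π) :=
  ⟨fun x y => ∃ a b : Grid n,
    x = Quotient.mk (betaSetoid π) a ∧ y = Quotient.mk (betaSetoid π) b ∧ beta π (a ⊔ b) b⟩

/-- The 4-cell `[(i−1,j−1),(i,j)]` is a source cell of `θ`: both upper edges are
collapsed but the long diagonal is not. -/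
def SourceCell {n : ℕ} (θ : Grid n → Grid n → Prop) (i j : Fin n) : Prop :=
  θ (i.castSucc, j.succ) (i.succ, j.succ) ∧
  θ (i.succ, j.castSucc) (i.succ, j.succ) ∧
  ¬ θ (i.castSucc, j.castSucc) (i.succ, j.succ)

/-!
Membership in an up-set `{x | p ≤ x.1 ∨ q ≤ x.2}` is a sup-homomorphism to `Prop`, so its kernel
is a join-congruence. For the corner `(p, q) = (m, π m)` every generator of `β_π` lies on one side
of the boundary, hence `β_π` never collapses a pair across it. With `m = i` this keeps the diagonal
of the cell `(i, π i)` open, and the top edge of the cell `(i, j)` when `j < π i`; with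
`m = π⁻¹ j > i` it keeps its right edge open. In the remaining case `π⁻¹ j < i`, `π i < j`, the
joins of the generators at row `i` and at column `j` collapse the diagonal.
-/

theorem SupHom.isJoinCong_ker {S T : Type*} [SemilatticeSup S] [SemilatticeSup T]
    (f : SupHom S T) : IsJoinCong fun a b => f a = f b :=
  ⟨⟨fun _ => rfl, Eq.symm, Eq.trans⟩, fun a b c (h : f a = f b) => by simp only [map_sup, h]⟩

theorem joinCongGen_isJoinCong {S : Type*} [SemilatticeSup S] (R : S → S → Prop) :
    IsJoinCong (joinCongGen R) :=
  ⟨joinCongGen_equivalence R, fun a b c h θ hθ hR => hθ.2 a b c (h θ hθ hR)⟩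

theorem joinCongGen_of_rel {S : Type*} [SemilatticeSup S] {R : S → S → Prop} {a b : S}
    (h : R a b) : joinCongGen R a b :=
  fun _ _ hR => hR a b h

namespace Grid

variable {n : ℕ}

/-- `x` is not strictly below `(p, q)` in both coordinates. -/
def outside (p q : Fin (n + 1)) : SupHom (Grid n) Prop where
  toFun x := p ≤ x.1 ∨ q ≤ x.2
  map_sup' a b := by
    simp only [Prod.fst_sup, Prod.snd_sup, le_sup_iff, sup_Prop_eq, eq_iff_iff]
    tauto

theorem outside_apply (p q : Fin (n + 1)) (x : Grid n) :
    outside p q x ↔ p ≤ x.1 ∨ q ≤ x.2 :=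
  Iff.rfl

end Grid

open Grid

section Beta

variable {n : ℕ} (π : Equiv.Perm (Fin n))

theorem betaGen_outside_eq (m : Fin n) {a b : Grid n} (h : betaGen π a b) :
    outside m.succ (π m).succ a = outside m.succ (π m).succ b := by
  obtain ⟨k, ⟨rfl, rfl⟩ | ⟨rfl, rfl⟩⟩ := h <;> apply propext <;>
    simp only [outside_apply, Fin.succ_le_castSucc_iff, Fin.succ_le_succ_iff] <;>
    rcases eq_or_ne m k with rfl | hmk
  · simp
  · grind
  · simp
  · have := π.injective.ne hmk
    grind

theorem beta_outside_iff (m : Fin n) {a b : Grid n} (h : beta π a b) :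
    outside m.succ (π m).succ a ↔ outside m.succ (π m).succ b :=
  (h _ (outside _ _).isJoinCong_ker fun _ _ => betaGen_outside_eq π m).to_iff

theorem beta_of_betaGen {a b : Grid n} (h : betaGen π a b) : beta π a b :=
  joinCongGen_of_rel h

theorem beta_sup {a b : Grid n} (c : Grid n) (h : beta π a b) : beta π (a ⊔ c) (b ⊔ c) :=
  (joinCongGen_isJoinCong _).2 a b c h

theorem beta_trans {a b c : Grid n} (hab : beta π a b) (hbc : beta π b c) : beta π a c :=
  (joinCongGen_equivalence _).trans hab hbc

theorem beta_horizontal_edge (k : Fin n) {y : Fin (n + 1)} (hy : (π k).succ ≤ y) :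
    beta π (k.castSucc, y) (k.succ, y) := by
  have h := beta_sup π (k.castSucc, y) (beta_of_betaGen π ⟨k, .inl ⟨rfl, rfl⟩⟩)
  rwa [Prod.mk_sup_mk, Prod.mk_sup_mk, sup_idem, sup_eq_right.mpr hy,
    sup_eq_left.mpr k.castSucc_le_succ] at h

theorem beta_vertical_edge (k : Fin n) {x : Fin (n + 1)} (hx : k.succ ≤ x) :
    beta π (x, (π k).castSucc) (x, (π k).succ) := by
  have h := beta_sup π (x, (π k).castSucc) (beta_of_betaGen π ⟨k, .inr ⟨rfl, rfl⟩⟩)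
  rwa [Prod.mk_sup_mk, Prod.mk_sup_mk, sup_idem, sup_eq_right.mpr hx,
    sup_eq_left.mpr (π k).castSucc_le_succ] at h

theorem beta_diagonal {i j : Fin n} (hi : π.symm j < i) (hj : π i < j) :
    beta π (i.castSucc, j.castSucc) (i.succ, j.succ) := by
  have hvert := beta_vertical_edge π (π.symm j) (x := i.succ) (Fin.succ_le_succ_iff.mpr hi.le)
  rw [Equiv.apply_symm_apply] at hvert
  exact beta_trans π (beta_horizontal_edge π i (Fin.succ_le_castSucc_iff.mpr hj)) hvert

theorem not_beta_diagonal (i : Fin n) :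
    ¬ beta π (i.castSucc, (π i).castSucc) (i.succ, (π i).succ) := fun h => by
  simpa [outside_apply] using beta_outside_iff π i h

theorem not_beta_top_edge {i j : Fin n} (hj : j < π i) :
    ¬ beta π (i.castSucc, j.succ) (i.succ, j.succ) := fun h =>
  hj.not_ge (by simpa [outside_apply] using beta_outside_iff π i h)

theorem not_beta_right_edge {i j : Fin n} (hi : i < π.symm j) :
    ¬ beta π (i.succ, j.castSucc) (i.succ, j.succ) := fun h =>
  hi.not_ge (by simpa [outside_apply] using beta_outside_iff π (π.symm j) h)

end Beta

/-- the 4-cell `[(i−1,j−1),(i,j)]` of `G_n` is a source cell of `β_π`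
iff `j = π i`. -/
theorem sourceCell_beta_iff {n : ℕ} (π : Equiv.Perm (Fin n)) (i j : Fin n) :
    SourceCell (beta π) i j ↔ j = π i := by
  constructor
  · rintro ⟨htop, hright, hdiag⟩
    by_contra hne
    rcases lt_or_gt_of_ne hne with hj | hj
    · exact not_beta_top_edge π hj htop
    · have hi : i ≠ π.symm j := fun h => hne (by rw [h, Equiv.apply_symm_apply])
      rcases lt_or_gt_of_ne hi with hi | hi
      · exact not_beta_right_edge π hi hright
      · exact hdiag (beta_diagonal π hi hj)
  · rintro rfl
    exact ⟨beta_of_betaGen π ⟨i, .inl ⟨rfl, rfl⟩⟩, beta_of_betaGen π ⟨i, .inr ⟨rfl, rfl⟩⟩,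
      not_beta_diagonal π i⟩
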